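/- arXiv:1704.07655 — 2 statements merged into one kernel-verified Lean document; each statement's English description precedes it below -/
import Mathlib

section
/- Let ℓ ≥ 2, n ≥ 2, and suppose the multicharge κ = (κ_1,…,κ_l) ∈ ℤ^l satisfies: (SS1) for all i ∈ I, ⟨Λ_κ, α^∨_{i,n}⟩ ≤ 1, and (SS2) for all j, (n−1)/2 ≤ bar(κ_j) ≤ ℓ − (n−1)/2. Then any two standard tableaux s, t of shapes that are l-multipartitions of n are equal if and only if their residue sequences are equal: i^s = i^t implies s = t (and shape(s) = shape(t)). -/
/-- The type `C_ℓ^(1)` folding residue map: reduce mod `2ℓ`, then fold `k ↦ min (k, 2ℓ − k)`. -/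
def bar (ℓ : ℕ) (m : ℤ) : ℕ :=
  min ((m % (2 * ℓ)).toNat) (2 * ℓ - (m % (2 * ℓ)).toNat)

/-- `lam` is an `l`-multipartition of `n`: an `l`-tuple of Young diagrams of total size `n`. -/
def IsMPT (l n : ℕ) (lam : Fin l → YoungDiagram) : Prop :=
  ∑ j : Fin l, (lam j).card = n

/-- `T` is a standard tableau of shape the `l`-multipartition `lam` of `n`:
`T k` is the node (component, row, column) containing the entry `k+1`; `T` is a bijection
onto the set of nodes of `lam`, and every prefix of entries forms a Young diagram in each
component (equivalently, entries increase along rows and columns). -/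
def IsStdM (l n : ℕ) (lam : Fin l → YoungDiagram) (T : Fin n → Fin l × ℕ × ℕ) : Prop :=
  Function.Injective T ∧
  (∀ (j : Fin l) (p : ℕ × ℕ), p ∈ lam j ↔ ∃ k : Fin n, T k = (j, p)) ∧
  ∀ (m : ℕ) (j : Fin l), IsLowerSet {p : ℕ × ℕ | ∃ k : Fin n, k.val < m ∧ T k = (j, p)}

/-- The residue sequence of a tableau: the `k`-th entry is the residue
`bar (κ_j + c − r)` of the node `(j, r, c)` containing `k+1`. -/
def resSeq (ℓ l n : ℕ) (κ : Fin l → ℤ) (T : Fin n → Fin l × ℕ × ℕ) : Fin n → ℕ :=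
  fun k => bar ℓ (κ (T k).1 + ((T k).2.2 : ℤ) - ((T k).2.1 : ℤ))

/-- Condition (SS1): `⟨Λ_κ, α^∨_{i,n}⟩ ≤ 1` for all `i ∈ I`, i.e. for each `i` at most one
component `j` has `bar κ_j` among `i, i+1, …, i+n−1` (indices mod `ℓ+1`). -/
def SS1 (ℓ l n : ℕ) (κ : Fin l → ℤ) : Prop :=
  ∀ i : ℕ, i ≤ ℓ → ∀ j j' : Fin l,
    (∃ k < n, bar ℓ (κ j) = (i + k) % (ℓ + 1)) →
    (∃ k < n, bar ℓ (κ j') = (i + k) % (ℓ + 1)) → j = j'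

/-- Condition (SS2): `(n−1)/2 ≤ bar κ_j ≤ ℓ − (n−1)/2` for every `j`. -/
def SS2 (ℓ l n : ℕ) (κ : Fin l → ℤ) : Prop :=
  ∀ j : Fin l, (n : ℤ) - 1 ≤ 2 * bar ℓ (κ j) ∧
    2 * (bar ℓ (κ j) : ℤ) ≤ 2 * ℓ - ((n : ℤ) - 1)

set_option maxHeartbeats 1000000

lemma bar_le (ℓ : ℕ) (m : ℤ) : bar ℓ m ≤ ℓ := by unfold bar; omega

lemma bar_dvd (ℓ : ℕ) (hℓ : 1 ≤ ℓ) (m : ℤ) :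
    (2*ℓ:ℤ) ∣ (m - bar ℓ m) ∨ (2*ℓ:ℤ) ∣ (m + bar ℓ m) := by
  have h2 : (0:ℤ) < 2*ℓ := by positivity
  have hr0 : 0 ≤ m % (2*ℓ) := Int.emod_nonneg m (by omega)
  have hrlt : m % (2*ℓ) < 2*ℓ := Int.emod_lt_of_pos m h2
  have hd : (2*ℓ:ℤ) ∣ (m - m % (2*ℓ)) :=
    ⟨m / (2*ℓ), by linarith [Int.mul_ediv_add_emod m (2*ℓ)]⟩
  have hcast : ((m % (2*ℓ)).toNat : ℤ) = m % (2*ℓ) := Int.toNat_of_nonneg hr0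
  set a : ℕ := (m % (2*ℓ)).toNat with ha
  have haz : (a:ℤ) < 2*ℓ := by rw [hcast]; exact hrlt
  rcases le_total a (2*ℓ - a) with h | h
  · left
    have : bar ℓ m = a := min_eq_left h
    rw [this, hcast]; exact hd
  · right
    have hb : bar ℓ m = 2*ℓ - a := min_eq_right h
    have hc2 : ((2*ℓ - a : ℕ) : ℤ) = 2*(ℓ:ℤ) - a := by
      have : a ≤ 2*ℓ := by exact_mod_cast haz.le
      push_cast [this]; ring
    rw [hb, hc2, hcast]
    obtain ⟨q, hq⟩ := hd
    exact ⟨q + 1, by linarith⟩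

lemma bar_eq_bar (ℓ : ℕ) (hℓ : 1 ≤ ℓ) {x y : ℤ} (h : bar ℓ x = bar ℓ y) :
    (2*ℓ:ℤ) ∣ (x - y) ∨ (2*ℓ:ℤ) ∣ (x + y) := by
  rcases bar_dvd ℓ hℓ x with hx | hx <;> rcases bar_dvd ℓ hℓ y with hy | hy
  · left
    have h' := dvd_sub hx (h ▸ hy)
    have e : (x - (bar ℓ x : ℤ)) - (y - (bar ℓ x : ℤ)) = x - y := by ring
    rwa [e] at h'
  · right
    have h' := dvd_add hx (h ▸ hy)
    have e : (x - (bar ℓ x : ℤ)) + (y + (bar ℓ x : ℤ)) = x + y := by ring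
    rwa [e] at h'
  · right
    have h' := dvd_add hx (h ▸ hy)
    have e : (x + (bar ℓ x : ℤ)) + (y - (bar ℓ x : ℤ)) = x + y := by ring
    rwa [e] at h'
  · left
    have h' := dvd_sub hx (h ▸ hy)
    have e : (x + (bar ℓ x : ℤ)) - (y + (bar ℓ x : ℤ)) = x - y := by ring
    rwa [e] at h'

lemma dvd_cases3 {c m : ℤ} (hc : 0 < c) (h : c ∣ m) (h1 : -c ≤ m) (h2 : m ≤ c) :
    m = -c ∨ m = 0 ∨ m = c := by
  obtain ⟨q, rfl⟩ := h
  have hq1 : -1 ≤ q := le_of_mul_le_mul_left (by linarith) hc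
  have hq2 : q ≤ 1 := le_of_mul_le_mul_left (by linarith) hc
  have : q = -1 ∨ q = 0 ∨ q = 1 := by omega
  rcases this with rfl | rfl | rfl
  · left; ring
  · right; left; ring
  · right; right; ring

lemma dvd_cases2 {c m : ℤ} (hc : 0 < c) (h : c ∣ m) (h1 : -c < m) (h2 : m < 2*c) :
    m = 0 ∨ m = c := by
  obtain ⟨q, rfl⟩ := h
  have hq1 : -1 < q := lt_of_mul_lt_mul_left (by linarith) hc.le
  have hq2 : q < 2 := lt_of_mul_lt_mul_left (by linarith) hc.le
  have : q = 0 ∨ q = 1 := by omega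
  rcases this with rfl | rfl
  · left; ring
  · right; ring


def Addable (A : Finset (ℕ × ℕ)) (p : ℕ × ℕ) : Prop :=
  p ∉ A ∧ IsLowerSet (insert p (↑A : Set (ℕ × ℕ)))

lemma Addable.mem {A : Finset (ℕ × ℕ)} {p q : ℕ × ℕ} (h : Addable A p)
    (hq : q ≤ p) (hne : q ≠ p) : q ∈ A := by
  have h' := h.2 hq (Set.mem_insert p _)
  rcases Set.mem_insert_iff.mp h' with h'' | h''
  · exact absurd h'' hne
  · exact h''

lemma addable_bounds {A : Finset (ℕ × ℕ)} {r c : ℕ} (h : Addable A (r, c)) :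
    r ≤ A.card ∧ c ≤ A.card := by
  constructor
  · have hsub : (Finset.range r).image (fun x => (x, (0:ℕ))) ⊆ A := by
      intro q hq
      simp only [Finset.mem_image, Finset.mem_range] at hq
      obtain ⟨x, hx, rfl⟩ := hq
      exact h.mem ⟨hx.le, Nat.zero_le c⟩ (fun he => by
        simp only [Prod.mk.injEq] at he; omega)
    calc r = ((Finset.range r).image (fun x => (x, (0:ℕ)))).card := by
            rw [Finset.card_image_of_injective _
              (fun a b hab => by simpa using hab)]
            simp
      _ ≤ A.card := Finset.card_le_card hsub
  · have hsub : (Finset.range c).image (fun y => ((0:ℕ), y)) ⊆ A := by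
      intro q hq
      simp only [Finset.mem_image, Finset.mem_range] at hq
      obtain ⟨y, hy, rfl⟩ := hq
      exact h.mem ⟨Nat.zero_le r, hy.le⟩ (fun he => by
        simp only [Prod.mk.injEq] at he; omega)
    calc c = ((Finset.range c).image (fun y => ((0:ℕ), y))).card := by
            rw [Finset.card_image_of_injective _
              (fun a b hab => by simpa using hab)]
            simp
      _ ≤ A.card := Finset.card_le_card hsub

lemma addable_row_eq {A : Finset (ℕ × ℕ)} {r c1 c2 : ℕ}
    (h1 : Addable A (r, c1)) (h2 : Addable A (r, c2)) : c1 = c2 := by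
  rcases lt_trichotomy c1 c2 with h | h | h
  · refine absurd (h2.mem (q := (r, c1)) ⟨le_rfl, h.le⟩ (fun he => ?_)) h1.1
    simp only [Prod.mk.injEq] at he; omega
  · exact h
  · refine absurd (h1.mem (q := (r, c2)) ⟨le_rfl, h.le⟩ (fun he => ?_)) h2.1
    simp only [Prod.mk.injEq] at he; omega

lemma addable_pair {A : Finset (ℕ × ℕ)} (hlow : IsLowerSet (↑A : Set (ℕ × ℕ)))
    {r1 c1 r2 c2 : ℕ} (h1 : Addable A (r1, c1)) (h2 : Addable A (r2, c2))
    (hr : r1 < r2) :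
    c2 < c1 ∧ (r1+1)*(c1-c2) + (r2+1)*(c2+1) ≤ A.card + 2 := by
  have hc : c2 < c1 := by
    by_contra hcc
    push_neg at hcc   -- c1 ≤ c2
    have hm : (r1, c2) ∈ A := h2.mem (q := (r1, c2)) ⟨hr.le, le_rfl⟩ (fun he => by
      simp only [Prod.mk.injEq] at he; omega)
    exact h1.1 (hlow (⟨le_rfl, hcc⟩ : (r1,c1) ≤ (r1,c2)) hm)
  refine ⟨hc, ?_⟩
  classical
  set P1 : Finset (ℕ × ℕ) := (Finset.range (r1+1)) ×ˢ (Finset.Ico (c2+1) (c1+1)) with hP1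
  set P2 : Finset (ℕ × ℕ) := (Finset.range (r2+1)) ×ˢ (Finset.range (c2+1)) with hP2
  have hm1 : (r1, c1) ∈ P1 := by
    simp only [hP1, Finset.mem_product, Finset.mem_range, Finset.mem_Ico]
    omega
  have hm2 : (r2, c2) ∈ P2 := by
    simp only [hP2, Finset.mem_product, Finset.mem_range]
    omega
  set W1 := P1.erase (r1, c1) with hW1
  set W2 := P2.erase (r2, c2) with hW2
  have hsub1 : W1 ⊆ A := by
    intro q hq
    rw [hW1, Finset.mem_erase] at hq
    obtain ⟨hne, hmm⟩ := hq
    simp only [hP1, Finset.mem_product, Finset.mem_range, Finset.mem_Ico] at hmm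
    exact h1.mem ⟨by omega, by omega⟩ hne
  have hsub2 : W2 ⊆ A := by
    intro q hq
    rw [hW2, Finset.mem_erase] at hq
    obtain ⟨hne, hmm⟩ := hq
    simp only [hP2, Finset.mem_product, Finset.mem_range] at hmm
    exact h2.mem ⟨by omega, by omega⟩ hne
  have hdis : Disjoint W1 W2 := by
    rw [Finset.disjoint_left]
    intro q hq1 hq2
    simp only [hW1, hP1, Finset.mem_erase, Finset.mem_product, Finset.mem_range,
      Finset.mem_Ico] at hq1
    simp only [hW2, hP2, Finset.mem_erase, Finset.mem_product, Finset.mem_range] at hq2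
    omega
  have hcard : W1.card + W2.card ≤ A.card := by
    rw [← Finset.card_union_of_disjoint hdis]
    exact Finset.card_le_card (Finset.union_subset hsub1 hsub2)
  have hc1 : W1.card = (r1+1)*(c1-c2) - 1 := by
    rw [hW1, Finset.card_erase_of_mem hm1, hP1, Finset.card_product,
      Finset.card_range, Nat.card_Ico]
    congr 2
    omega
  have hc2 : W2.card = (r2+1)*(c2+1) - 1 := by
    rw [hW2, Finset.card_erase_of_mem hm2, hP2, Finset.card_product,
      Finset.card_range, Finset.card_range]
  have hp1 : 1 ≤ (r1+1)*(c1-c2) := Nat.mul_pos (by omega) (by omega)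
  have hp2 : 1 ≤ (r2+1)*(c2+1) := Nat.mul_pos (by omega) (by omega)
  obtain ⟨Q1, hQ1⟩ : ∃ q, (r1+1)*(c1-c2) = q := ⟨_, rfl⟩
  obtain ⟨Q2, hQ2⟩ : ∃ q, (r2+1)*(c2+1) = q := ⟨_, rfl⟩
  rw [hQ1] at hc1 hp1
  rw [hQ2] at hc2 hp2
  rw [hQ1, hQ2]
  omega

lemma same_comp_core (ℓ n cA : ℕ) (hℓ : 2 ≤ ℓ) (b : ℕ)
    (hbl : (n:ℤ) - 1 ≤ 2*b) (hbu : 2*(b:ℤ) ≤ 2*ℓ - ((n:ℤ)-1))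
    (hcA : cA ≤ n - 1)
    (r1 c1 r2 c2 : ℕ) (hr : r1 < r2) (hc : c2 < c1)
    (hQ : (r1+1)*(c1-c2) + (r2+1)*(c2+1) ≤ cA + 2)
    (hdvd : (2*ℓ:ℤ) ∣ (((c1:ℤ) - r1) - ((c2:ℤ) - r2)) ∨
      (2*ℓ:ℤ) ∣ (2*b + (((c1:ℤ) - r1) + ((c2:ℤ) - r2))) ∨
      (2*ℓ:ℤ) ∣ (2*b - (((c1:ℤ) - r1) + ((c2:ℤ) - r2)))) : False := by
  have hQ' : ((r1:ℤ)+1)*((c1:ℤ)-c2) + ((r2:ℤ)+1)*((c2:ℤ)+1) ≤ (cA:ℤ) + 2 := by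
    zify [Nat.le_of_lt hc] at hQ
    convert hQ using 2 <;> push_cast <;> ring
  have hr' : (r1:ℤ) + 1 ≤ r2 := by exact_mod_cast hr
  have hc' : (c2:ℤ) + 1 ≤ c1 := by exact_mod_cast hc
  have hr0 : (0:ℤ) ≤ r1 := Int.ofNat_nonneg r1
  have hc0 : (0:ℤ) ≤ c2 := Int.ofNat_nonneg c2
  have G1 : (c1:ℤ) + c2 + 1 ≤ cA + r1 + r2 := by
    nlinarith [mul_nonneg hr0 (show (0:ℤ) ≤ c1 - c2 - 1 by linarith),
      mul_nonneg (show (0:ℤ) ≤ (r2:ℤ) - 1 by linarith) hc0]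
  have G2 : (r1:ℤ) + r2 + 1 ≤ cA + c1 + c2 := by
    nlinarith [mul_nonneg (show (0:ℤ) ≤ (r1:ℤ) + 2 by linarith)
        (show (0:ℤ) ≤ c1 - c2 - 1 by linarith),
      mul_nonneg (show (0:ℤ) ≤ (r2:ℤ) + 3 by linarith) hc0]
  have G3 : (c1:ℤ) - c2 + r2 ≤ cA + 1 := by
    nlinarith [mul_nonneg hr0 (show (0:ℤ) ≤ c1 - c2 by linarith),
      mul_nonneg (show (0:ℤ) ≤ (r2:ℤ) + 1 by linarith) hc0]
  have f1 : (1:ℤ)*(1:ℤ) ≤ ((r1:ℤ)+1)*((c1:ℤ)-c2) :=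
    mul_le_mul (by linarith) (by linarith) (by norm_num) (by linarith)
  have f2 : (2:ℤ)*(1:ℤ) ≤ ((r2:ℤ)+1)*((c2:ℤ)+1) :=
    mul_le_mul (by linarith) (by linarith) (by norm_num) (by linarith)
  have hA1 : (1:ℤ) ≤ cA := by nlinarith [f1, f2]
  have hn2 : 2 ≤ n := by
    have : (1:ℕ) ≤ cA := by exact_mod_cast hA1
    omega
  have hcAZ : (cA:ℤ) ≤ (n:ℤ) - 1 := by
    have := hcA; omega
  have hℓZ : (2:ℤ) ≤ ℓ := by exact_mod_cast hℓ
  have hpos : (0:ℤ) < 2*ℓ := by linarith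
  rcases hdvd with h | h | h
  · have hD : (0:ℤ) < ((c1:ℤ) - r1) - ((c2:ℤ) - r2) := by linarith
    have := Int.le_of_dvd hD h
    -- D ≤ cA + 1 ≤ n ≤ ℓ + 1 < 2ℓ
    have hnl : (n:ℤ) - 1 ≤ ℓ := by linarith
    linarith
  · have hm : (0:ℤ) < 2*b + (((c1:ℤ) - r1) + ((c2:ℤ) - r2)) := by linarith
    have := Int.le_of_dvd hm h
    linarith
  · have hm : (0:ℤ) < 2*b - (((c1:ℤ) - r1) + ((c2:ℤ) - r2)) := by linarith
    have := Int.le_of_dvd hm h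
    linarith

lemma diff_comp_core (ℓ n : ℕ) (hℓ : 2 ≤ ℓ) (b1 b2 : ℕ)
    (hb1l : (n:ℤ)-1 ≤ 2*b1) (hb1u : 2*(b1:ℤ) ≤ 2*ℓ - ((n:ℤ)-1))
    (hb2l : (n:ℤ)-1 ≤ 2*b2) (hb2u : 2*(b2:ℤ) ≤ 2*ℓ - ((n:ℤ)-1))
    (hb1ℓ : b1 ≤ ℓ) (hb2ℓ : b2 ≤ ℓ)
    (e : ℤ) (helo : -((n:ℤ)-1) ≤ e) (hehi : e ≤ (n:ℤ)-1)
    (hdvd : (2*ℓ:ℤ) ∣ ((b1:ℤ) - b2 - e) ∨ (2*ℓ:ℤ) ∣ ((b1:ℤ) + b2 - e)) :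
    (b1:ℤ) ≤ b2 + ((n:ℤ)-1) ∧ (b2:ℤ) ≤ b1 + ((n:ℤ)-1) := by
  have hℓZ : (2:ℤ) ≤ ℓ := by exact_mod_cast hℓ
  have hb1ℓ' : (b1:ℤ) ≤ ℓ := by exact_mod_cast hb1ℓ
  have hb2ℓ' : (b2:ℤ) ≤ ℓ := by exact_mod_cast hb2ℓ
  have hb10 : (0:ℤ) ≤ b1 := Int.ofNat_nonneg b1
  have hb20 : (0:ℤ) ≤ b2 := Int.ofNat_nonneg b2
  have hnl : (n:ℤ) - 1 ≤ ℓ := by linarith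
  have hpos : (0:ℤ) < 2*ℓ := by linarith
  rcases hdvd with h | h
  · rcases dvd_cases3 hpos h (by linarith) (by linarith) with h' | h' | h'
    · exfalso; linarith
    · constructor <;> linarith
    · exfalso; linarith
  · rcases dvd_cases2 hpos h (by linarith) (by linarith) with h' | h'
    · -- b1 + b2 = e ≤ n-1, each ≥ (n-1)/2 ⇒ b1 = b2
      constructor <;> linarith
    · constructor <;> linarith

lemma ss1_conclude (ℓ l n : ℕ) (κ : Fin l → ℤ) (h1 : SS1 ℓ l n κ) (hn : 1 ≤ n)
    (j1 j2 : Fin l)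
    (hd1 : bar ℓ (κ j1) ≤ bar ℓ (κ j2) + (n-1))
    (hd2 : bar ℓ (κ j2) ≤ bar ℓ (κ j1) + (n-1)) : j1 = j2 := by
  have hb1 : bar ℓ (κ j1) ≤ ℓ := bar_le ℓ _
  have hb2 : bar ℓ (κ j2) ≤ ℓ := bar_le ℓ _
  rcases le_total (bar ℓ (κ j1)) (bar ℓ (κ j2)) with h | h
  · refine h1 (bar ℓ (κ j1)) hb1 j1 j2 ⟨0, hn, ?_⟩
      ⟨bar ℓ (κ j2) - bar ℓ (κ j1), by omega, ?_⟩
    · rw [Nat.add_zero, Nat.mod_eq_of_lt (by omega)]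
    · rw [Nat.mod_eq_of_lt (by omega)]; omega
  · refine h1 (bar ℓ (κ j2)) hb2 j1 j2
      ⟨bar ℓ (κ j1) - bar ℓ (κ j2), by omega, ?_⟩ ⟨0, hn, ?_⟩
    · rw [Nat.mod_eq_of_lt (by omega)]; omega
    · rw [Nat.add_zero, Nat.mod_eq_of_lt (by omega)]


lemma key (ℓ l n : ℕ) (hℓ : 2 ≤ ℓ) (hn : 1 ≤ n) (κ : Fin l → ℤ)
    (h1 : SS1 ℓ l n κ) (h2 : SS2 ℓ l n κ)
    (A : Fin l → Finset (ℕ × ℕ)) (hlow : ∀ j, IsLowerSet (↑(A j) : Set (ℕ × ℕ)))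
    (hcards : ∀ j j' : Fin l, j ≠ j' → (A j).card + (A j').card ≤ n - 1)
    (hcard : ∀ j, (A j).card ≤ n - 1)
    (j1 j2 : Fin l) (p1 p2 : ℕ × ℕ)
    (ha1 : Addable (A j1) p1) (ha2 : Addable (A j2) p2)
    (hres : bar ℓ (κ j1 + (p1.2:ℤ) - (p1.1:ℤ)) = bar ℓ (κ j2 + (p2.2:ℤ) - (p2.1:ℤ))) :
    j1 = j2 ∧ p1 = p2 := by
  obtain ⟨r1, c1⟩ := p1
  obtain ⟨r2, c2⟩ := p2
  dsimp only at hres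
  by_cases hj : j1 = j2
  · subst hj
    refine ⟨rfl, ?_⟩
    have hsame : ∀ (a1 b1 a2 b2 : ℕ), Addable (A j1) (a1, b1) → Addable (A j1) (a2, b2) →
        a1 < a2 → bar ℓ (κ j1 + (b1:ℤ) - (a1:ℤ)) = bar ℓ (κ j1 + (b2:ℤ) - (a2:ℤ)) →
        False := by
      intro a1 b1 a2 b2 hA1 hA2 hlt hrr
      obtain ⟨hcc, hQ⟩ := addable_pair (hlow j1) hA1 hA2 hlt
      refine same_comp_core ℓ n (A j1).card hℓ (bar ℓ (κ j1)) (h2 j1).1 (h2 j1).2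
        (hcard j1) a1 b1 a2 b2 hlt hcc hQ ?_
      have hb := bar_eq_bar ℓ (by omega) hrr
      have hk := bar_dvd ℓ (by omega) (κ j1)
      rcases hb with h | h
      · left
        have e : (κ j1 + (b1:ℤ) - a1) - (κ j1 + (b2:ℤ) - a2)
            = ((b1:ℤ) - a1) - ((b2:ℤ) - a2) := by ring
        rwa [e] at h
      · rcases hk with hk | hk
        · right; left
          have hd := dvd_sub h (Dvd.dvd.mul_left hk 2)
          have e : ((κ j1 + (b1:ℤ) - a1) + (κ j1 + (b2:ℤ) - a2))
              - 2*(κ j1 - (bar ℓ (κ j1) : ℤ))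
              = 2*(bar ℓ (κ j1) : ℤ) + (((b1:ℤ) - a1) + ((b2:ℤ) - a2)) := by ring
          rwa [e] at hd
        · right; right
          have hd := dvd_sub (Dvd.dvd.mul_left hk 2) h
          have e : 2*(κ j1 + (bar ℓ (κ j1) : ℤ))
              - ((κ j1 + (b1:ℤ) - a1) + (κ j1 + (b2:ℤ) - a2))
              = 2*(bar ℓ (κ j1) : ℤ) - (((b1:ℤ) - a1) + ((b2:ℤ) - a2)) := by ring
          rwa [e] at hd
    rcases lt_trichotomy r1 r2 with h | h | h
    · exact (hsame r1 c1 r2 c2 ha1 ha2 h hres).elim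
    · subst h
      rw [addable_row_eq ha1 ha2]
    · exact (hsame r2 c2 r1 c1 ha2 ha1 h hres.symm).elim
  · exfalso
    apply hj
    have hbd1 := addable_bounds ha1
    have hbd2 := addable_bounds ha2
    have hc12 := hcards j1 j2 hj
    have hsum : ((A j1).card:ℤ) + ((A j2).card:ℤ) ≤ (n:ℤ) - 1 := by omega
    have hd1a : -(((A j1).card):ℤ) ≤ (c1:ℤ) - r1 := by
      have := hbd1.1; omega
    have hd1b : (c1:ℤ) - r1 ≤ ((A j1).card:ℤ) := by
      have := hbd1.2; omega
    have hd2a : -(((A j2).card):ℤ) ≤ (c2:ℤ) - r2 := by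
      have := hbd2.1; omega
    have hd2b : (c2:ℤ) - r2 ≤ ((A j2).card:ℤ) := by
      have := hbd2.2; omega
    have hboth : ((bar ℓ (κ j1)):ℤ) ≤ (bar ℓ (κ j2)) + ((n:ℤ)-1) ∧
        ((bar ℓ (κ j2)):ℤ) ≤ (bar ℓ (κ j1)) + ((n:ℤ)-1) := by
      have hb := bar_eq_bar ℓ (by omega) hres
      have hk1 := bar_dvd ℓ (by omega) (κ j1)
      have hk2 := bar_dvd ℓ (by omega) (κ j2)
      rcases hb with h | h <;> rcases hk1 with hk1 | hk1 <;> rcases hk2 with hk2 | hk2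
      · refine diff_comp_core ℓ n hℓ _ _ (h2 j1).1 (h2 j1).2 (h2 j2).1 (h2 j2).2
          (bar_le ℓ _) (bar_le ℓ _) (((c2:ℤ) - r2) - ((c1:ℤ) - r1))
          (by linarith) (by linarith) (Or.inl ?_)
        have hd := dvd_add (dvd_sub h hk1) hk2
        have e : ((κ j1 + (c1:ℤ) - r1) - (κ j2 + (c2:ℤ) - r2))
            - (κ j1 - (bar ℓ (κ j1) : ℤ)) + (κ j2 - (bar ℓ (κ j2) : ℤ))
            = ((bar ℓ (κ j1)):ℤ) - (bar ℓ (κ j2)) - (((c2:ℤ) - r2) - ((c1:ℤ) - r1)) := by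
          ring
        rwa [e] at hd
      · refine diff_comp_core ℓ n hℓ _ _ (h2 j1).1 (h2 j1).2 (h2 j2).1 (h2 j2).2
          (bar_le ℓ _) (bar_le ℓ _) (((c2:ℤ) - r2) - ((c1:ℤ) - r1))
          (by linarith) (by linarith) (Or.inr ?_)
        have hd := dvd_add (dvd_sub h hk1) hk2
        have e : ((κ j1 + (c1:ℤ) - r1) - (κ j2 + (c2:ℤ) - r2))
            - (κ j1 - (bar ℓ (κ j1) : ℤ)) + (κ j2 + (bar ℓ (κ j2) : ℤ))
            = ((bar ℓ (κ j1)):ℤ) + (bar ℓ (κ j2)) - (((c2:ℤ) - r2) - ((c1:ℤ) - r1)) := by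
          ring
        rwa [e] at hd
      · refine diff_comp_core ℓ n hℓ _ _ (h2 j1).1 (h2 j1).2 (h2 j2).1 (h2 j2).2
          (bar_le ℓ _) (bar_le ℓ _) (((c1:ℤ) - r1) - ((c2:ℤ) - r2))
          (by linarith) (by linarith) (Or.inr ?_)
        have hd := dvd_sub (dvd_sub hk1 h) hk2
        have e : ((κ j1 + (bar ℓ (κ j1) : ℤ)) - ((κ j1 + (c1:ℤ) - r1) - (κ j2 + (c2:ℤ) - r2)))
            - (κ j2 - (bar ℓ (κ j2) : ℤ))
            = ((bar ℓ (κ j1)):ℤ) + (bar ℓ (κ j2)) - (((c1:ℤ) - r1) - ((c2:ℤ) - r2)) := by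
          ring
        rwa [e] at hd
      · refine diff_comp_core ℓ n hℓ _ _ (h2 j1).1 (h2 j1).2 (h2 j2).1 (h2 j2).2
          (bar_le ℓ _) (bar_le ℓ _) (((c1:ℤ) - r1) - ((c2:ℤ) - r2))
          (by linarith) (by linarith) (Or.inl ?_)
        have hd := dvd_sub (dvd_sub hk1 h) hk2
        have e : ((κ j1 + (bar ℓ (κ j1) : ℤ)) - ((κ j1 + (c1:ℤ) - r1) - (κ j2 + (c2:ℤ) - r2)))
            - (κ j2 + (bar ℓ (κ j2) : ℤ))
            = ((bar ℓ (κ j1)):ℤ) - (bar ℓ (κ j2)) - (((c1:ℤ) - r1) - ((c2:ℤ) - r2)) := by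
          ring
        rwa [e] at hd
      · refine diff_comp_core ℓ n hℓ _ _ (h2 j1).1 (h2 j1).2 (h2 j2).1 (h2 j2).2
          (bar_le ℓ _) (bar_le ℓ _) (-(((c1:ℤ) - r1) + ((c2:ℤ) - r2)))
          (by linarith) (by linarith) (Or.inr ?_)
        have hd := dvd_sub (dvd_sub h hk1) hk2
        have e : ((κ j1 + (c1:ℤ) - r1) + (κ j2 + (c2:ℤ) - r2))
            - (κ j1 - (bar ℓ (κ j1) : ℤ)) - (κ j2 - (bar ℓ (κ j2) : ℤ))
            = ((bar ℓ (κ j1)):ℤ) + (bar ℓ (κ j2)) - (-(((c1:ℤ) - r1) + ((c2:ℤ) - r2))) := by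
          ring
        rwa [e] at hd
      · refine diff_comp_core ℓ n hℓ _ _ (h2 j1).1 (h2 j1).2 (h2 j2).1 (h2 j2).2
          (bar_le ℓ _) (bar_le ℓ _) (-(((c1:ℤ) - r1) + ((c2:ℤ) - r2)))
          (by linarith) (by linarith) (Or.inl ?_)
        have hd := dvd_sub (dvd_sub h hk1) hk2
        have e : ((κ j1 + (c1:ℤ) - r1) + (κ j2 + (c2:ℤ) - r2))
            - (κ j1 - (bar ℓ (κ j1) : ℤ)) - (κ j2 + (bar ℓ (κ j2) : ℤ))
            = ((bar ℓ (κ j1)):ℤ) - (bar ℓ (κ j2)) - (-(((c1:ℤ) - r1) + ((c2:ℤ) - r2))) := by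
          ring
        rwa [e] at hd
      · refine diff_comp_core ℓ n hℓ _ _ (h2 j1).1 (h2 j1).2 (h2 j2).1 (h2 j2).2
          (bar_le ℓ _) (bar_le ℓ _) (((c1:ℤ) - r1) + ((c2:ℤ) - r2))
          (by linarith) (by linarith) (Or.inl ?_)
        have hd := dvd_sub (dvd_add hk1 hk2) h
        have e : ((κ j1 + (bar ℓ (κ j1) : ℤ)) + (κ j2 - (bar ℓ (κ j2) : ℤ)))
            - ((κ j1 + (c1:ℤ) - r1) + (κ j2 + (c2:ℤ) - r2))
            = ((bar ℓ (κ j1)):ℤ) - (bar ℓ (κ j2)) - (((c1:ℤ) - r1) + ((c2:ℤ) - r2)) := by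
          ring
        rwa [e] at hd
      · refine diff_comp_core ℓ n hℓ _ _ (h2 j1).1 (h2 j1).2 (h2 j2).1 (h2 j2).2
          (bar_le ℓ _) (bar_le ℓ _) (((c1:ℤ) - r1) + ((c2:ℤ) - r2))
          (by linarith) (by linarith) (Or.inr ?_)
        have hd := dvd_sub (dvd_add hk1 hk2) h
        have e : ((κ j1 + (bar ℓ (κ j1) : ℤ)) + (κ j2 + (bar ℓ (κ j2) : ℤ)))
            - ((κ j1 + (c1:ℤ) - r1) + (κ j2 + (c2:ℤ) - r2))
            = ((bar ℓ (κ j1)):ℤ) + (bar ℓ (κ j2)) - (((c1:ℤ) - r1) + ((c2:ℤ) - r2)) := by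
          ring
        rwa [e] at hd
    exact ss1_conclude ℓ l n κ h1 hn j1 j2 (by omega) (by omega)

lemma step (ℓ l n : ℕ) (hℓ : 2 ≤ ℓ) (κ : Fin l → ℤ)
    (h1 : SS1 ℓ l n κ) (h2 : SS2 ℓ l n κ)
    (lam mu : Fin l → YoungDiagram)
    (S T : Fin n → Fin l × ℕ × ℕ) (hS : IsStdM l n lam S) (hT : IsStdM l n mu T)
    (hres : resSeq ℓ l n κ S = resSeq ℓ l n κ T)
    (k : Fin n) (IH : ∀ i : Fin n, i.val < k.val → S i = T i) : S k = T k := by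
  classical
  set A : Fin l → Finset (ℕ × ℕ) := fun j =>
    (Finset.univ.filter (fun i : Fin n => i.val < k.val ∧ (S i).1 = j)).image
      (fun i => (S i).2) with hA
  have hmemA : ∀ (j : Fin l) (p : ℕ × ℕ),
      p ∈ A j ↔ ∃ i : Fin n, i.val < k.val ∧ S i = (j, p) := by
    intro j p
    simp only [hA, Finset.mem_image, Finset.mem_filter, Finset.mem_univ, true_and]
    constructor
    · rintro ⟨i, ⟨hi, hj⟩, hp⟩
      exact ⟨i, hi, by rw [← hj, ← hp]⟩
    · rintro ⟨i, hi, hp⟩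
      exact ⟨i, ⟨hi, by rw [hp]⟩, by rw [hp]⟩
  have hmemAT : ∀ (j : Fin l) (p : ℕ × ℕ),
      p ∈ A j ↔ ∃ i : Fin n, i.val < k.val ∧ T i = (j, p) := by
    intro j p
    rw [hmemA]
    constructor
    · rintro ⟨i, hi, hp⟩; exact ⟨i, hi, by rw [← IH i hi, hp]⟩
    · rintro ⟨i, hi, hp⟩; exact ⟨i, hi, by rw [IH i hi, hp]⟩
  have hsetA : ∀ j : Fin l, (↑(A j) : Set (ℕ × ℕ))
      = {p : ℕ × ℕ | ∃ i : Fin n, i.val < k.val ∧ S i = (j, p)} :=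
    fun j => Set.ext fun p => by simpa using hmemA j p
  have hlowA : ∀ j, IsLowerSet (↑(A j) : Set (ℕ × ℕ)) := by
    intro j
    rw [hsetA j]
    exact hS.2.2 k.val j
  -- cardinalities
  have hcardA : ∀ j, (A j).card
      = (Finset.univ.filter (fun i : Fin n => i.val < k.val ∧ (S i).1 = j)).card := by
    intro j
    apply Finset.card_image_of_injOn
    intro i hi i' hi' hii
    simp only [Finset.coe_filter, Set.mem_setOf_eq, Finset.mem_univ, true_and] at hi hi'
    apply hS.1
    have : (S i).1 = (S i').1 := by rw [hi.2, hi'.2]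
    exact Prod.ext this hii
  have hfle : ∀ (P : Fin n → Prop) [DecidablePred P],
      (∀ i, P i → i.val < k.val) → (Finset.univ.filter P).card ≤ k.val := by
    intro P _ hP
    calc (Finset.univ.filter P).card
        = ((Finset.univ.filter P).image Fin.val).card :=
          (Finset.card_image_of_injective _ Fin.val_injective).symm
      _ ≤ (Finset.range k.val).card := by
          apply Finset.card_le_card
          intro x hx
          simp only [Finset.mem_image, Finset.mem_filter, Finset.mem_univ, true_and] at hx
          obtain ⟨i, hi, rfl⟩ := hx
          exact Finset.mem_range.mpr (hP i hi)
      _ = k.val := Finset.card_range _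
  have hcard1 : ∀ j, (A j).card ≤ n - 1 := by
    intro j
    have := hfle (fun i => i.val < k.val ∧ (S i).1 = j) (fun i hi => hi.1)
    have hk := k.isLt
    have hca := hcardA j
    omega
  have hcard2 : ∀ j j' : Fin l, j ≠ j' → (A j).card + (A j').card ≤ n - 1 := by
    intro j j' hjj
    have hdis : Disjoint (Finset.univ.filter (fun i : Fin n => i.val < k.val ∧ (S i).1 = j))
        (Finset.univ.filter (fun i : Fin n => i.val < k.val ∧ (S i).1 = j')) := by
      rw [Finset.disjoint_left]
      intro i hi hi'
      simp only [Finset.mem_filter, Finset.mem_univ, true_and] at hi hi'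
      exact hjj (hi.2 ▸ hi'.2 ▸ rfl)
    have hun : ((Finset.univ.filter (fun i : Fin n => i.val < k.val ∧ (S i).1 = j)) ∪
        (Finset.univ.filter (fun i : Fin n => i.val < k.val ∧ (S i).1 = j'))).card ≤ k.val := by
      rw [← Finset.filter_or]
      exact hfle _ (fun i hi => by rcases hi with h | h; exacts [h.1, h.1])
    rw [Finset.card_union_of_disjoint hdis] at hun
    rw [hcardA j, hcardA j']
    have hk := k.isLt
    omega
  -- addability for S k
  have haddS : Addable (A (S k).1) (S k).2 := by
    constructor
    · intro hmem
      obtain ⟨i, hi, hEq⟩ := (hmemA _ _).1 hmem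
      have : S i = S k := by rw [hEq]
      exact absurd (congrArg Fin.val (hS.1 this)) (by omega)
    · have hins : insert (S k).2 (↑(A (S k).1) : Set (ℕ × ℕ))
          = {p : ℕ × ℕ | ∃ i : Fin n, i.val < k.val + 1 ∧ S i = ((S k).1, p)} := by
        ext p
        simp only [Set.mem_insert_iff, Set.mem_setOf_eq, Finset.coe_insert]
        constructor
        · rintro (rfl | hmem)
          · exact ⟨k, by omega, rfl⟩
          · obtain ⟨i, hi, hEq⟩ := (hmemA _ _).1 (by exact_mod_cast hmem)
            exact ⟨i, by omega, hEq⟩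
        · rintro ⟨i, hi, hEq⟩
          by_cases hik : i.val < k.val
          · right
            exact_mod_cast (hmemA _ _).2 ⟨i, hik, hEq⟩
          · left
            have : i = k := Fin.ext (by omega)
            subst this
            rw [hEq]
      rw [hins]
      exact hS.2.2 (k.val + 1) (S k).1
  have haddT : Addable (A (T k).1) (T k).2 := by
    constructor
    · intro hmem
      obtain ⟨i, hi, hEq⟩ := (hmemAT _ _).1 hmem
      have : T i = T k := by rw [hEq]
      exact absurd (congrArg Fin.val (hT.1 this)) (by omega)
    · have hins : insert (T k).2 (↑(A (T k).1) : Set (ℕ × ℕ))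
          = {p : ℕ × ℕ | ∃ i : Fin n, i.val < k.val + 1 ∧ T i = ((T k).1, p)} := by
        ext p
        simp only [Set.mem_insert_iff, Set.mem_setOf_eq]
        constructor
        · rintro (rfl | hmem)
          · exact ⟨k, by omega, rfl⟩
          · obtain ⟨i, hi, hEq⟩ := (hmemAT _ _).1 (by exact_mod_cast hmem)
            exact ⟨i, by omega, hEq⟩
        · rintro ⟨i, hi, hEq⟩
          by_cases hik : i.val < k.val
          · right
            exact_mod_cast (hmemAT _ _).2 ⟨i, hik, hEq⟩
          · left
            have : i = k := Fin.ext (by omega)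
            subst this
            rw [hEq]
      rw [hins]
      exact hT.2.2 (k.val + 1) (T k).1
  have hresk : bar ℓ (κ (S k).1 + ((S k).2.2 : ℤ) - ((S k).2.1 : ℤ))
      = bar ℓ (κ (T k).1 + ((T k).2.2 : ℤ) - ((T k).2.1 : ℤ)) := congrFun hres k
  obtain ⟨hj, hp⟩ := key ℓ l n hℓ k.pos κ h1 h2 A hlowA hcard2 hcard1
    (S k).1 (T k).1 (S k).2 (T k).2 haddS haddT hresk
  exact Prod.ext hj hp

/-- Lemma 3.2: under (SS1) and (SS2), standard tableaux (of shapes `l`-multipartitions of `n`)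
are determined by their residue sequences. -/
theorem std_tableau_eq_of_resSeq_eq (ℓ l n : ℕ) (hℓ : 2 ≤ ℓ) (κ : Fin l → ℤ)
    (h1 : SS1 ℓ l n κ) (h2 : SS2 ℓ l n κ)
    (lam mu : Fin l → YoungDiagram) (hlam : IsMPT l n lam) (hmu : IsMPT l n mu)
    (S T : Fin n → Fin l × ℕ × ℕ) (hS : IsStdM l n lam S) (hT : IsStdM l n mu T) :
    resSeq ℓ l n κ S = resSeq ℓ l n κ T ↔ (lam = mu ∧ S = T) := by
  constructor
  · intro hres
    have hST : ∀ m : ℕ, ∀ k : Fin n, k.val = m → S k = T k := by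
      intro m
      induction m using Nat.strong_induction_on with
      | _ m IHm =>
        intro k hk
        exact step ℓ l n hℓ κ h1 h2 lam mu S T hS hT hres k
          (fun i hi => IHm i.val (hk ▸ hi) i rfl)
    have hSTf : S = T := funext fun k => hST k.val k rfl
    refine ⟨?_, hSTf⟩
    funext j
    apply YoungDiagram.ext
    apply Finset.ext
    intro p
    rw [YoungDiagram.mem_cells, YoungDiagram.mem_cells, hS.2.1 j p, hT.2.1 j p, hSTf]
  · rintro ⟨_, rfl⟩
    rfl
end

section
/- Let F be a field, ℓ ≥ 2, n ≥ 2, and let Λ = Λ_κ with bar(κ_j) ∈ {0, ℓ} for some j. Define a 2-dimensional F-space M with basis u, v, residue sequence i = i^λ where λ has all components empty except λ^{(j)} = (n), and actions: e(i) acts as identity, all other e(i') act as 0, all ψ_r act as 0, x_r u = 0 for all r, x_r v = 0 if r ≡ 1 (mod ℓ), x_{2kℓ+r} v = (−1)^r u for 2 ≤ r ≤ ℓ, and x_{2kℓ+r} v = (−1)^{r+1} u for ℓ+2 ≤ r ≤ 2ℓ. Then M satisfies all defining relations of R^Λ_n and is a uniserial (non-semisimple) module: Fu is a submodule with no complement.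 -/
/-- The type `C_ℓ^(1)` folding residue map valued in `I = Fin (ℓ+1)`:
reduce mod `2ℓ`, then fold `k ↦ min (k, 2ℓ − k)` (for `ℓ ≥ 1` this value is `≤ ℓ`). -/
def barF (ℓ : ℕ) (m : ℤ) : Fin (ℓ + 1) :=
  ⟨min ((m % (2 * ℓ)).toNat) (2 * ℓ - (m % (2 * ℓ)).toNat) % (ℓ + 1),
    Nat.mod_lt _ (by omega)⟩

/-- Generators of the quiver Hecke algebra of type `C_ℓ^(1)` on `n` strands:
idempotents `e i` for `i ∈ I^n`, polynomial generators `x r`, and `ψ r` for `1 ≤ r ≤ n−1`. -/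
inductive QGen (ℓ n : ℕ) : Type
  | e : (Fin n → Fin (ℓ + 1)) → QGen ℓ n
  | x : Fin n → QGen ℓ n
  | p : Fin (n - 1) → QGen ℓ n

variable (F : Type) [Field F]

/-- The free algebra on the generators. -/
abbrev QFree (F : Type) [Field F] (ℓ n : ℕ) := FreeAlgebra F (QGen ℓ n)

namespace QH

variable {ℓ n : ℕ}

/-- `e(i)` as an element of the free algebra. -/
def E (F : Type) [Field F] {ℓ n : ℕ} (i : Fin n → Fin (ℓ + 1)) : QFree F ℓ n :=
  FreeAlgebra.ι F (QGen.e i)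

/-- `x_r` as an element of the free algebra. -/
def X (F : Type) [Field F] {ℓ n : ℕ} (r : Fin n) : QFree F ℓ n :=
  FreeAlgebra.ι F (QGen.x r)

/-- `ψ_r` as an element of the free algebra. -/
def P (F : Type) [Field F] {ℓ n : ℕ} (r : Fin (n - 1)) : QFree F ℓ n :=
  FreeAlgebra.ι F (QGen.p r)

/-- The strand `r` (0-indexed) of the crossing `ψ_r`. -/
def fa {n : ℕ} (r : Fin (n - 1)) : Fin n := ⟨r.val, by omega⟩

/-- The strand `r+1` (0-indexed) of the crossing `ψ_r`. -/
def fb {n : ℕ} (r : Fin (n - 1)) : Fin n := ⟨r.val + 1, by omega⟩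

/-- The action of the simple transposition `s_r` on sequences `i ∈ I^n`. -/
def sw {ℓ n : ℕ} (r : Fin (n - 1)) (i : Fin n → Fin (ℓ + 1)) : Fin n → Fin (ℓ + 1) :=
  i ∘ (Equiv.swap (fa r) (fb r))

/-- `⟨Λ_κ, α^∨_i⟩`: the number of components `j` of the multicharge with `bar κ_j = i`. -/
def wtMultF (ℓ : ℕ) {l : ℕ} (κ : Fin l → ℤ) (i : Fin (ℓ + 1)) : ℕ :=
  (Finset.univ.filter (fun j : Fin l => barF ℓ (κ j) = i)).card

/-- The defining relations of the cyclotomic quiver Hecke algebra `R^Λ_n` of type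
`C_ℓ^(1)` with `Λ = Λ_κ`, as listed in the paper. -/
inductive Rel (F : Type) [Field F] (ℓ n l : ℕ) (κ : Fin l → ℤ) :
    QFree F ℓ n → QFree F ℓ n → Prop
  | idem (i j : Fin n → Fin (ℓ + 1)) :
      Rel F ℓ n l κ (E F i * E F j) (if i = j then E F i else 0)
  | sum : Rel F ℓ n l κ (∑ i : Fin n → Fin (ℓ + 1), E F i) 1
  | xe (r : Fin n) (i : Fin n → Fin (ℓ + 1)) :
      Rel F ℓ n l κ (X F r * E F i) (E F i * X F r)
  | xx (r s : Fin n) : Rel F ℓ n l κ (X F r * X F s) (X F s * X F r)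
  | pe (r : Fin (n - 1)) (i : Fin n → Fin (ℓ + 1)) :
      Rel F ℓ n l κ (P F r * E F i) (E F (sw r i) * P F r)
  | px (r : Fin (n - 1)) (s : Fin n) (h1 : s ≠ fa r) (h2 : s ≠ fb r) :
      Rel F ℓ n l κ (P F r * X F s) (X F s * P F r)
  | xape (r : Fin (n - 1)) (i : Fin n → Fin (ℓ + 1)) :
      Rel F ℓ n l κ (X F (fa r) * P F r * E F i)
        ((P F r * X F (fb r) - if i (fa r) = i (fb r) then 1 else 0) * E F i)
  | xbpe (r : Fin (n - 1)) (i : Fin n → Fin (ℓ + 1)) :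
      Rel F ℓ n l κ (X F (fb r) * P F r * E F i)
        ((P F r * X F (fa r) + if i (fa r) = i (fb r) then 1 else 0) * E F i)
  | ppfar (r s : Fin (n - 1)) (h : r.val + 1 < s.val) :
      Rel F ℓ n l κ (P F r * P F s) (P F s * P F r)
  | quad01 (r : Fin (n - 1)) (i : Fin n → Fin (ℓ + 1))
      (h : ((i (fa r)).val = 0 ∧ (i (fb r)).val = 1) ∨
           ((i (fa r)).val = ℓ ∧ (i (fb r)).val = ℓ - 1)) :
      Rel F ℓ n l κ (P F r ^ 2 * E F i) ((X F (fa r) + X F (fb r) ^ 2) * E F i)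
  | quad10 (r : Fin (n - 1)) (i : Fin n → Fin (ℓ + 1))
      (h : ((i (fa r)).val = 1 ∧ (i (fb r)).val = 0) ∨
           ((i (fa r)).val = ℓ - 1 ∧ (i (fb r)).val = ℓ)) :
      Rel F ℓ n l κ (P F r ^ 2 * E F i) ((X F (fa r) ^ 2 + X F (fb r)) * E F i)
  | quadAdj (r : Fin (n - 1)) (i : Fin n → Fin (ℓ + 1))
      (h : (i (fb r)).val = (i (fa r)).val + 1 ∨ (i (fa r)).val = (i (fb r)).val + 1)
      (ha0 : (i (fa r)).val ≠ 0) (hb0 : (i (fb r)).val ≠ 0)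
      (hal : (i (fa r)).val ≠ ℓ) (hbl : (i (fb r)).val ≠ ℓ) :
      Rel F ℓ n l κ (P F r ^ 2 * E F i) ((X F (fa r) + X F (fb r)) * E F i)
  | quadEq (r : Fin (n - 1)) (i : Fin n → Fin (ℓ + 1)) (h : i (fa r) = i (fb r)) :
      Rel F ℓ n l κ (P F r ^ 2 * E F i) 0
  | quadFar (r : Fin (n - 1)) (i : Fin n → Fin (ℓ + 1))
      (hne : i (fa r) ≠ i (fb r))
      (h1 : (i (fb r)).val ≠ (i (fa r)).val + 1)
      (h2 : (i (fa r)).val ≠ (i (fb r)).val + 1) :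
      Rel F ℓ n l κ (P F r ^ 2 * E F i) (E F i)
  | braidSpec (r : Fin (n - 1)) (h : r.val + 1 < n - 1) (i : Fin n → Fin (ℓ + 1))
      (heq : (i (fa r)).val = (i ⟨r.val + 2, by omega⟩).val)
      (hres : ((i (fa r)).val = 1 ∧ (i (fb r)).val = 0) ∨
              ((i (fa r)).val = ℓ - 1 ∧ (i (fb r)).val = ℓ)) :
      Rel F ℓ n l κ (P F ⟨r.val + 1, h⟩ * P F r * P F ⟨r.val + 1, h⟩ * E F i)
        ((P F r * P F ⟨r.val + 1, h⟩ * P F r + X F (fa r) + X F ⟨r.val + 2, by omega⟩) * E F i)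
  | braidAdj (r : Fin (n - 1)) (h : r.val + 1 < n - 1) (i : Fin n → Fin (ℓ + 1))
      (heq : (i (fa r)).val = (i ⟨r.val + 2, by omega⟩).val)
      (hadj : (i (fa r)).val = (i (fb r)).val + 1 ∨ (i (fb r)).val = (i (fa r)).val + 1)
      (hb0 : (i (fb r)).val ≠ 0) (hbl : (i (fb r)).val ≠ ℓ) :
      Rel F ℓ n l κ (P F ⟨r.val + 1, h⟩ * P F r * P F ⟨r.val + 1, h⟩ * E F i)
        ((P F r * P F ⟨r.val + 1, h⟩ * P F r + 1) * E F i)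
  | braidFar (r : Fin (n - 1)) (h : r.val + 1 < n - 1) (i : Fin n → Fin (ℓ + 1))
      (hno : ¬ ((i (fa r)).val = (i ⟨r.val + 2, by omega⟩).val ∧
        ((i (fa r)).val = (i (fb r)).val + 1 ∨ (i (fb r)).val = (i (fa r)).val + 1))) :
      Rel F ℓ n l κ (P F ⟨r.val + 1, h⟩ * P F r * P F ⟨r.val + 1, h⟩ * E F i)
        (P F r * P F ⟨r.val + 1, h⟩ * P F r * E F i)
  | cyc (hn : 0 < n) (i : Fin n → Fin (ℓ + 1)) :
      Rel F ℓ n l κ (X F ⟨0, hn⟩ ^ (wtMultF ℓ κ (i ⟨0, hn⟩)) * E F i) 0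

end QH

/-- The cyclotomic quiver Hecke algebra `R^Λ_n` of type `C_ℓ^(1)` over `F`, with
`Λ = Λ_κ` for the multicharge `κ`. -/
abbrev RC (F : Type) [Field F] (ℓ n l : ℕ) (κ : Fin l → ℤ) :=
  RingQuot (QH.Rel F ℓ n l κ)

namespace QH

/-- The image of `e(i)` in `R^Λ_n`. -/
def gE (F : Type) [Field F] (ℓ n l : ℕ) (κ : Fin l → ℤ)
    (i : Fin n → Fin (ℓ + 1)) : RC F ℓ n l κ :=
  RingQuot.mkAlgHom F (Rel F ℓ n l κ) (E F i)

/-- The image of `x_r` in `R^Λ_n`. -/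
def gX (F : Type) [Field F] (ℓ n l : ℕ) (κ : Fin l → ℤ) (r : Fin n) :
    RC F ℓ n l κ :=
  RingQuot.mkAlgHom F (Rel F ℓ n l κ) (X F r)

/-- The image of `ψ_r` in `R^Λ_n`. -/
def gP (F : Type) [Field F] (ℓ n l : ℕ) (κ : Fin l → ℤ) (r : Fin (n - 1)) :
    RC F ℓ n l κ :=
  RingQuot.mkAlgHom F (Rel F ℓ n l κ) (P F r)

end QH

/-- The coefficient `c_m ∈ F` (for the 1-indexed position `m`) in the action
`x_m v = c_m u`: it is `0` if `m ≡ 1 (mod ℓ)`, `(−1)^m` if `m ≡ r (mod 2ℓ)` with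
`2 ≤ r ≤ ℓ`, and `(−1)^{m+1}` if `m ≡ r (mod 2ℓ)` with `ℓ+2 ≤ r ≤ 2ℓ`. -/
def coeffM (F : Type) [Field F] (ℓ m : ℕ) : F :=
  if m % ℓ = 1 then 0
  else if 2 ≤ m % (2 * ℓ) ∧ m % (2 * ℓ) ≤ ℓ then (-1 : F) ^ m
  else (-1 : F) ^ (m + 1)

/-- The action of `x_r` on `M = F u ⊕ F v` (with `u = (1,0)`, `v = (0,1)`):
`x_r u = 0` and `x_r v = c_{r+1} u` (1-indexed position `r+1`). -/
def XactM (F : Type) [Field F] (ℓ : ℕ) {n : ℕ} (r : Fin n) : (F × F) →ₗ[F] (F × F) :=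
  coeffM F ℓ (r.val + 1) • ((LinearMap.inl F F F).comp (LinearMap.snd F F F))


namespace Lem311

lemma mod_succ (m : ℕ) (hm : 2 ≤ m) (k : ℕ) :
    (k + 1) % m = if k % m + 1 = m then 0 else k % m + 1 := by
  have h1 := Nat.mod_lt k (show 0 < m by omega)
  rw [Nat.add_mod, Nat.mod_eq_of_lt (show 1 < m by omega)]
  split
  · next h' => rw [h', Nat.mod_self]
  · next h' => exact Nat.mod_eq_of_lt (by omega)

def g (ℓ k : ℕ) : ℕ := min (k % (2 * ℓ)) (2 * ℓ - k % (2 * ℓ))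

lemma g_adj {ℓ : ℕ} (hℓ : 2 ≤ ℓ) (k : ℕ) :
    g ℓ (k + 1) = g ℓ k + 1 ∨ g ℓ k = g ℓ (k + 1) + 1 := by
  have ht := Nat.mod_lt k (show 0 < 2 * ℓ by omega)
  unfold g
  rw [mod_succ (2 * ℓ) (by omega) k]
  split <;> omega

lemma g_ne_adj {ℓ : ℕ} (hℓ : 2 ≤ ℓ) (k : ℕ) : g ℓ k ≠ g ℓ (k + 1) := by
  rcases g_adj hℓ k with h | h <;> omega

lemma mod_half {ℓ t : ℕ} (h : t < 2 * ℓ) : t % ℓ = if t < ℓ then t else t - ℓ := by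
  split
  · exact Nat.mod_eq_of_lt ‹_›
  · rw [Nat.mod_eq_sub_mod (by omega), Nat.mod_eq_of_lt (by omega)]

lemma g_special {ℓ : ℕ} (hℓ : 2 ≤ ℓ) (k : ℕ) :
    (g ℓ k = 0 ∨ g ℓ k = ℓ) ↔ k % ℓ = 0 := by
  have ht := Nat.mod_lt k (show 0 < 2 * ℓ by omega)
  have e : k % ℓ = k % (2 * ℓ) % ℓ := (Nat.mod_mod_of_dvd k ⟨2, by ring⟩).symm
  rw [e, mod_half ht]
  unfold g
  split <;> omega

lemma g_turn {ℓ : ℕ} (hℓ : 2 ≤ ℓ) (k : ℕ) (h : g ℓ k = g ℓ (k + 2)) :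
    g ℓ (k + 1) = 0 ∨ g ℓ (k + 1) = ℓ := by
  have ht := Nat.mod_lt k (show 0 < 2 * ℓ by omega)
  have h1 := mod_succ (2 * ℓ) (by omega) k
  have h2 : (k + 2) % (2 * ℓ) =
      if (k + 1) % (2 * ℓ) + 1 = 2 * ℓ then 0 else (k + 1) % (2 * ℓ) + 1 :=
    mod_succ (2 * ℓ) (by omega) (k + 1)
  unfold g at h ⊢
  rw [h2, h1] at h
  rw [h1]
  split_ifs at h ⊢ <;> omega

lemma coeff_special {ℓ m : ℕ} (h : m % ℓ = 1) : coeffM F ℓ m = 0 := by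
  unfold coeffM; rw [if_pos h]

lemma coeff_one {ℓ : ℕ} (hℓ : 2 ≤ ℓ) : coeffM F ℓ 1 = 0 :=
  coeff_special F (Nat.mod_eq_of_lt (by omega))

lemma coeff_two {ℓ : ℕ} (hℓ : 2 ≤ ℓ) : coeffM F ℓ 2 = 1 := by
  have h1 : 2 % ℓ ≠ 1 := by
    rw [mod_half (show 2 < 2 * ℓ by omega)]; split_ifs <;> omega
  have h2 : 2 % (2 * ℓ) = 2 := Nat.mod_eq_of_lt (by omega)
  unfold coeffM
  rw [if_neg h1, h2, if_pos ⟨le_refl 2, hℓ⟩]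
  norm_num

lemma coeff_adj_sum {ℓ : ℕ} (hℓ : 2 ≤ ℓ) {m : ℕ} (h1 : m % ℓ ≠ 1)
    (h2 : (m + 1) % ℓ ≠ 1) : coeffM F ℓ m + coeffM F ℓ (m + 1) = 0 := by
  have ht := Nat.mod_lt m (show 0 < 2 * ℓ by omega)
  have e1 : m % ℓ = m % (2 * ℓ) % ℓ := (Nat.mod_mod_of_dvd m ⟨2, by ring⟩).symm
  have e2 : (m + 1) % ℓ = (m + 1) % (2 * ℓ) % ℓ :=
    (Nat.mod_mod_of_dvd _ ⟨2, by ring⟩).symm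
  have h3 : (m + 1) % (2 * ℓ) =
      if m % (2 * ℓ) + 1 = 2 * ℓ then 0 else m % (2 * ℓ) + 1 :=
    mod_succ (2 * ℓ) (by omega) m
  have f1 : m % (2 * ℓ) ≠ 1 ∧ m % (2 * ℓ) ≠ ℓ + 1 := by
    rw [e1, mod_half ht] at h1; split_ifs at h1 <;> omega
  have f2 : m % (2 * ℓ) ≠ 0 ∧ m % (2 * ℓ) ≠ ℓ := by
    rw [e2, h3] at h2
    split_ifs at h2 with hif
    · constructor <;> omega
    · rw [mod_half (by omega)] at h2; split_ifs at h2 <;> omega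
  unfold coeffM
  rw [if_neg h1, if_neg h2, h3]
  split_ifs <;> first | (exfalso; omega) | (simp only [pow_succ]; ring)

lemma coeff_turn_sum {ℓ : ℕ} (hℓ : 2 ≤ ℓ) {m : ℕ} (h : m % ℓ = 0) :
    coeffM F ℓ m + coeffM F ℓ (m + 2) = 0 := by
  have ht := Nat.mod_lt m (show 0 < 2 * ℓ by omega)
  have e1 : m % ℓ = m % (2 * ℓ) % ℓ := (Nat.mod_mod_of_dvd m ⟨2, by ring⟩).symm
  have f1 : m % (2 * ℓ) = 0 ∨ m % (2 * ℓ) = ℓ := by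
    rw [e1, mod_half ht] at h; split_ifs at h <;> omega
  have h3 : (m + 1) % (2 * ℓ) =
      if m % (2 * ℓ) + 1 = 2 * ℓ then 0 else m % (2 * ℓ) + 1 :=
    mod_succ (2 * ℓ) (by omega) m
  have h4 : (m + 2) % (2 * ℓ) =
      if (m + 1) % (2 * ℓ) + 1 = 2 * ℓ then 0 else (m + 1) % (2 * ℓ) + 1 :=
    mod_succ (2 * ℓ) (by omega) (m + 1)
  have hm1 : m % ℓ ≠ 1 := by omega
  have hm2 : (m + 2) % ℓ ≠ 1 := by
    have e : (m + 2) % ℓ = 2 % ℓ := by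
      rw [Nat.add_mod, ‹m % ℓ = 0›, zero_add, Nat.mod_mod_of_dvd 2 dvd_rfl]
    rw [e, mod_half (show 2 < 2 * ℓ by omega)]
    split_ifs <;> omega
  unfold coeffM
  rw [if_neg hm1, if_neg hm2, h4, h3]
  rcases f1 with f | f <;> rw [f] <;>
    split_ifs <;> first | (exfalso; omega) | (simp only [pow_succ]; ring)

lemma barF_natCast {ℓ : ℕ} (hℓ : 1 ≤ ℓ) (a : ℕ) : (barF ℓ (a : ℤ)).val = g ℓ a := by
  have h0 : (((a : ℤ)) % (2 * (ℓ : ℤ))).toNat = a % (2 * ℓ) := by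
    have he : (2 * (ℓ : ℤ)) = ((2 * ℓ : ℕ) : ℤ) := by push_cast; ring
    rw [he]; omega
  show min (((a : ℤ) % (2 * (ℓ:ℤ))).toNat) (2 * ℓ - ((a:ℤ) % (2 * (ℓ:ℤ))).toNat) % (ℓ + 1)
      = g ℓ a
  rw [h0]
  have := Nat.mod_lt a (show 0 < 2 * ℓ by omega)
  unfold g
  exact Nat.mod_eq_of_lt (by omega)

lemma barF_congr {ℓ : ℕ} {m m' : ℤ} (h : m % (2 * (ℓ:ℤ)) = m' % (2 * (ℓ:ℤ))) :
    barF ℓ m = barF ℓ m' := by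
  unfold barF; simp only [h]

def L : Module.End F (F × F) := (LinearMap.inl F F F).comp (LinearMap.snd F F F)

lemma L_mul_L : L F * L F = 0 := by
  apply LinearMap.ext; intro p
  simp [L, Module.End.mul_apply]

lemma XactM_eq {ℓ n : ℕ} (r : Fin n) : XactM F ℓ r = coeffM F ℓ (r.val + 1) • L F := rfl

lemma X_mul_X {ℓ n : ℕ} (r t : Fin n) : XactM F ℓ r * XactM F ℓ t = 0 := by
  rw [XactM_eq, XactM_eq, smul_mul_assoc, mul_smul_comm, L_mul_L, smul_zero, smul_zero]

/-- The residue sequence of the one-row multipartition, as a function. -/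
def iseqD (ℓ n : ℕ) (c : ℤ) : Fin n → Fin (ℓ + 1) := fun k => barF ℓ (c + (k.val : ℤ))

/-- Values of the generators on the module `M = F × F`. -/
def g0 (ℓ n : ℕ) (c : ℤ) : QGen ℓ n → Module.End F (F × F)
  | .e i => if i = iseqD ℓ n c then 1 else 0
  | .x r => XactM F ℓ r
  | .p _ => 0

/-- The evaluation homomorphism on the free algebra. -/
def ev (ℓ n : ℕ) (c : ℤ) : QFree F ℓ n →ₐ[F] Module.End F (F × F) :=
  FreeAlgebra.lift F (g0 F ℓ n c)

lemma ev_E {ℓ n : ℕ} (c : ℤ) (i : Fin n → Fin (ℓ + 1)) :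
    ev F ℓ n c (QH.E F i) = if i = iseqD ℓ n c then 1 else 0 :=
  FreeAlgebra.lift_ι_apply _ _

lemma ev_X {ℓ n : ℕ} (c : ℤ) (r : Fin n) : ev F ℓ n c (QH.X F r) = XactM F ℓ r :=
  FreeAlgebra.lift_ι_apply _ _

lemma ev_P {ℓ n : ℕ} (c : ℤ) (r : Fin (n - 1)) : ev F ℓ n c (QH.P F r) = 0 :=
  FreeAlgebra.lift_ι_apply _ _

set_option maxHeartbeats 2000000 in
theorem ev_rel (ℓ n l : ℕ) (hℓ : 2 ≤ ℓ) (κ : Fin l → ℤ) (j : Fin l)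
    (hj : (barF ℓ (κ j)).val = 0 ∨ (barF ℓ (κ j)).val = ℓ) :
    ∀ ⦃x y : QFree F ℓ n⦄, QH.Rel F ℓ n l κ x y →
      ev F ℓ n (κ j) x = ev F ℓ n (κ j) y := by
  have hpos : (0:ℤ) < 2 * (ℓ:ℤ) := by omega
  set c : ℤ := κ j with hcdef
  set s : ℕ := (c % (2 * (ℓ:ℤ))).toNat with hsdef
  have hs0 : (s:ℤ) = c % (2 * (ℓ:ℤ)) := Int.toNat_of_nonneg (Int.emod_nonneg _ (by omega))
  have hslt : s < 2 * ℓ := by have := Int.emod_lt_of_pos c hpos; omega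
  have hcongr : ∀ k : ℕ, barF ℓ (c + (k:ℤ)) = barF ℓ (((s + k : ℕ)):ℤ) := by
    intro k
    apply barF_congr
    have h1 : (((s + k : ℕ)):ℤ) = (s:ℤ) + (k:ℤ) := by push_cast; ring
    conv_rhs => rw [h1, Int.add_emod, hs0, Int.emod_emod_of_dvd c dvd_rfl, ← Int.add_emod]
  have hval : ∀ k : ℕ, (barF ℓ (c + (k:ℤ))).val = g ℓ (s + k) := by
    intro k; rw [hcongr k, barF_natCast (show 1 ≤ ℓ by omega)]
  have hs : s = 0 ∨ s = ℓ := by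
    have h0 : (barF ℓ (c + ((0:ℕ):ℤ))).val = g ℓ (s + 0) := hval 0
    rw [show c + ((0:ℕ):ℤ) = c by simp] at h0
    have hgs : g ℓ s = min s (2 * ℓ - s) := by unfold g; rw [Nat.mod_eq_of_lt hslt]
    rw [h0, Nat.add_zero, hgs] at hj
    omega
  have hsmod : s % ℓ = 0 := by rcases hs with h | h <;> simp [h]
  have hkmod : ∀ k : ℕ, (s + k) % ℓ = k % ℓ := by
    intro k; rw [Nat.add_mod, hsmod, zero_add, Nat.mod_mod_of_dvd k dvd_rfl]
  have hsp0 : ∀ k : ℕ,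
      ((barF ℓ (c + (k:ℤ))).val = 0 ∨ (barF ℓ (c + (k:ℤ))).val = ℓ) → k % ℓ = 0 := by
    intro k hk
    rw [hval k] at hk
    have := (g_special hℓ (s + k)).mp hk
    rwa [hkmod] at this
  have hsp1 : ∀ k : ℕ,
      ((barF ℓ (c + (k:ℤ))).val = 0 ∨ (barF ℓ (c + (k:ℤ))).val = ℓ) →
      (k + 1) % ℓ = 1 := by
    intro k hk
    have h1 := hsp0 k hk
    rw [mod_succ ℓ hℓ k, h1, if_neg (by omega)]
  have hnsp : ∀ k : ℕ, (barF ℓ (c + (k:ℤ))).val ≠ 0 → (barF ℓ (c + (k:ℤ))).val ≠ ℓ →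
      (k + 1) % ℓ ≠ 1 := by
    intro k h1 h2 hcon
    rw [mod_succ ℓ hℓ k] at hcon
    have hk0 : k % ℓ = 0 := by split_ifs at hcon <;> omega
    have hk1 : (s + k) % ℓ = 0 := by rw [hkmod]; exact hk0
    have hk2 := (g_special hℓ (s + k)).mpr hk1
    rw [← hval k] at hk2
    rcases hk2 with h | h
    · exact h1 h
    · exact h2 h
  have hne : ∀ k : ℕ, barF ℓ (c + (k:ℤ)) ≠ barF ℓ (c + ((k + 1 : ℕ):ℤ)) := by
    intro k hcon
    have h1 := hval k
    have h2 := hval (k + 1)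
    rw [hcon] at h1
    exact g_ne_adj hℓ (s + k) (by rw [← h1]; exact h2)
  have hadjv : ∀ k : ℕ, (barF ℓ (c + ((k + 1 : ℕ):ℤ))).val = (barF ℓ (c + (k:ℤ))).val + 1 ∨
      (barF ℓ (c + (k:ℤ))).val = (barF ℓ (c + ((k + 1 : ℕ):ℤ))).val + 1 := by
    intro k
    rw [hval, hval]
    exact g_adj hℓ (s + k)
  have hturn : ∀ k : ℕ, (barF ℓ (c + (k:ℤ))).val = (barF ℓ (c + ((k + 2 : ℕ):ℤ))).val →
      ((barF ℓ (c + ((k + 1 : ℕ):ℤ))).val = 0 ∨ (barF ℓ (c + ((k + 1 : ℕ):ℤ))).val = ℓ) := by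
    intro k hk
    rw [hval k, hval (k + 2)] at hk
    rw [hval (k + 1)]
    exact g_turn hℓ (s + k) hk
  intro x y h
  induction h with
  | idem i i' =>
      by_cases hij : i = i'
      · subst hij
        rw [if_pos rfl, map_mul, ev_E]
        split_ifs <;> simp
      · rw [if_neg hij, map_mul, ev_E, ev_E, map_zero]
        split_ifs <;> simp_all
  | sum =>
      rw [map_sum, map_one]
      simp only [ev_E]
      rw [Finset.sum_ite_eq' Finset.univ (iseqD ℓ n c)
        (fun _ => (1 : Module.End F (F × F)))]
      simp
  | xe r i =>
      rw [map_mul, map_mul, ev_E, ev_X]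
      split_ifs <;> simp
  | xx r t =>
      rw [map_mul, map_mul, ev_X, ev_X, X_mul_X, X_mul_X]
  | pe r i =>
      rw [map_mul, map_mul, ev_P]
      simp
  | px r t h1 h2 =>
      rw [map_mul, map_mul, ev_P]
      simp
  | xape r i =>
      by_cases hd : i (QH.fa r) = i (QH.fb r)
      · by_cases hi : i = iseqD ℓ n c
        · exfalso
          subst hi
          exact hne r.val hd
        · rw [if_pos hd]
          simp only [map_mul, map_sub, ev_P, ev_E, ev_X, map_one]
          rw [if_neg hi]
          simp
      · rw [if_neg hd]
        simp only [map_mul, map_sub, ev_P, ev_E, ev_X, map_zero]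
        simp
  | xbpe r i =>
      by_cases hd : i (QH.fa r) = i (QH.fb r)
      · by_cases hi : i = iseqD ℓ n c
        · exfalso
          subst hi
          exact hne r.val hd
        · rw [if_pos hd]
          simp only [map_mul, map_add, ev_P, ev_E, ev_X, map_one]
          rw [if_neg hi]
          simp
      · rw [if_neg hd]
        simp only [map_mul, map_add, ev_P, ev_E, ev_X, map_zero]
        simp
  | ppfar r t h =>
      rw [map_mul, map_mul, ev_P, ev_P]
  | quad01 r i h =>
      simp only [map_mul, map_add, map_pow, ev_P, ev_E, ev_X]
      by_cases hi : i = iseqD ℓ n c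
      · subst hi
        rw [if_pos rfl]
        have hc0 : coeffM F ℓ ((QH.fa r).val + 1) = 0 := by
          apply coeff_special
          apply hsp1 r.val
          rcases h with ⟨h1, _⟩ | ⟨h1, _⟩
          · exact Or.inl h1
          · exact Or.inr h1
        have hX0 : XactM F ℓ (QH.fa r) = 0 := by
          rw [XactM_eq, hc0, zero_smul]
        have hXX : XactM F ℓ (QH.fb r) ^ 2 = 0 := by rw [sq, X_mul_X]
        rw [hX0, hXX]
        simp
      · rw [if_neg hi]; simp
  | quad10 r i h =>
      simp only [map_mul, map_add, map_pow, ev_P, ev_E, ev_X]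
      by_cases hi : i = iseqD ℓ n c
      · subst hi
        rw [if_pos rfl]
        have hc0 : coeffM F ℓ ((QH.fb r).val + 1) = 0 := by
          apply coeff_special
          apply hsp1 (r.val + 1)
          rcases h with ⟨_, h1⟩ | ⟨_, h1⟩
          · exact Or.inl h1
          · exact Or.inr h1
        have hX0 : XactM F ℓ (QH.fb r) = 0 := by
          rw [XactM_eq, hc0, zero_smul]
        have hXX : XactM F ℓ (QH.fa r) ^ 2 = 0 := by rw [sq, X_mul_X]
        rw [hX0, hXX]
        simp
      · rw [if_neg hi]; simp
  | quadAdj r i hadj' ha0 hb0 hal hbl =>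
      simp only [map_mul, map_add, map_pow, ev_P, ev_E, ev_X]
      by_cases hi : i = iseqD ℓ n c
      · subst hi
        rw [if_pos rfl]
        have hsum : coeffM F ℓ ((QH.fa r).val + 1) + coeffM F ℓ ((QH.fb r).val + 1) = 0 := by
          apply coeff_adj_sum F hℓ
          · exact hnsp r.val ha0 hal
          · exact hnsp (r.val + 1) hb0 hbl
        have hz : XactM F ℓ (QH.fa r) + XactM F ℓ (QH.fb r) = 0 := by
          rw [XactM_eq, XactM_eq, ← add_smul, hsum, zero_smul]
        rw [hz]
        simp
      · rw [if_neg hi]; simp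
  | quadEq r i h =>
      rw [map_mul, map_pow, ev_P, map_zero]
      simp
  | quadFar r i hne' h1 h2 =>
      simp only [map_mul, map_pow, ev_P, ev_E]
      have hi : i ≠ iseqD ℓ n c := by
        intro hi
        subst hi
        rcases hadjv r.val with h | h
        · exact h1 h
        · exact h2 h
      rw [if_neg hi]
      simp
  | braidSpec r hr i heq hres =>
      simp only [map_mul, map_add, ev_P, ev_E, ev_X]
      by_cases hi : i = iseqD ℓ n c
      · subst hi
        rw [if_pos rfl]
        have hm : (r.val + 1) % ℓ = 0 := by
          apply hsp0 (r.val + 1)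
          rcases hres with ⟨_, h1⟩ | ⟨_, h1⟩
          · exact Or.inl h1
          · exact Or.inr h1
        have hsum : coeffM F ℓ (r.val + 1) + coeffM F ℓ (r.val + 1 + 2) = 0 :=
          coeff_turn_sum F hℓ hm
        have hz : XactM F ℓ (QH.fa r) + XactM F ℓ (⟨r.val + 2, by omega⟩ : Fin n) = 0 := by
          show coeffM F ℓ (r.val + 1) • L F + coeffM F ℓ (r.val + 2 + 1) • L F = 0
          rw [show r.val + 2 + 1 = r.val + 1 + 2 by omega, ← add_smul, hsum, zero_smul]
        rw [show (0 : Module.End F (F × F)) * 0 * 0 = 0 by simp]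
        rw [zero_mul, zero_add, hz]
        simp
      · rw [if_neg hi]
        simp
  | braidAdj r hr i heq hadj' hb0 hbl =>
      simp only [map_mul, map_add, map_one, ev_P, ev_E]
      have hi : i ≠ iseqD ℓ n c := by
        intro hi
        subst hi
        rcases hturn r.val heq with h | h
        · exact hb0 h
        · exact hbl h
      rw [if_neg hi]
      simp
  | braidFar r hr i hno =>
      simp only [map_mul, ev_P]
  | cyc hn' i =>
      rw [map_mul, map_pow, ev_X, ev_E, map_zero]
      by_cases hi : i = iseqD ℓ n c
      · subst hi
        have h0 : XactM F ℓ (⟨0, hn'⟩ : Fin n) = 0 := by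
          rw [XactM_eq, show coeffM F ℓ ((⟨0, hn'⟩ : Fin n).val + 1) = 0 from
            coeff_one F hℓ, zero_smul]
        have hwt : QH.wtMultF ℓ κ (iseqD ℓ n c ⟨0, hn'⟩) ≠ 0 := by
          unfold QH.wtMultF
          apply Finset.card_ne_zero_of_mem (a := j)
          simp only [Finset.mem_filter, Finset.mem_univ, true_and]
          show barF ℓ (κ j) = barF ℓ (c + (((⟨0, hn'⟩ : Fin n)).val : ℤ))
          rw [← hcdef]
          norm_num
        rw [h0, zero_pow hwt, zero_mul]
      · rw [if_neg hi]
        simp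

end Lem311

/-- Lemma 3.11: if `bar κ_j ∈ {0, ℓ}` for some component `j` and `n > 1`, the prescribed
action on the 2-dimensional space `M = F u ⊕ F v` (concentrated on the residue sequence of
the one-row multipartition `λ` with `λ^{(j)} = (n)`) satisfies all defining relations of
`R^Λ_n`, and `F u` is a submodule admitting no invariant complement; hence `R^Λ_n` is not
semisimple. -/
theorem not_semisimple_kappa_zero_or_ell (ℓ n l : ℕ) (hℓ : 2 ≤ ℓ) (hn : 2 ≤ n)
    (κ : Fin l → ℤ) (j : Fin l)
    (hj : (barF ℓ (κ j)).val = 0 ∨ (barF ℓ (κ j)).val = ℓ) :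
    ∃ ρ : RC F ℓ n l κ →ₐ[F] Module.End F (F × F),
      (∀ i : Fin n → Fin (ℓ + 1),
        ρ (QH.gE F ℓ n l κ i) =
          if i = (fun k : Fin n => barF ℓ (κ j + (k.val : ℤ))) then 1 else 0) ∧
      (∀ r : Fin n, ρ (QH.gX F ℓ n l κ r) = XactM F ℓ r) ∧
      (∀ r : Fin (n - 1), ρ (QH.gP F ℓ n l κ r) = 0) ∧
      (∀ a : RC F ℓ n l κ,
        ρ a ((1 : F), (0 : F)) ∈ Submodule.span F {((1 : F), (0 : F))}) ∧
      ¬ ∃ W : Submodule F (F × F),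
          (∀ (a : RC F ℓ n l κ) (w : F × F), w ∈ W → ρ a w ∈ W) ∧
          IsCompl (Submodule.span F {((1 : F), (0 : F))}) W := by
  refine ⟨RingQuot.liftAlgHom F ⟨Lem311.ev F ℓ n (κ j),
    Lem311.ev_rel F ℓ n l hℓ κ j hj⟩, ?_, ?_, ?_, ?_, ?_⟩
  · intro i
    rw [QH.gE, RingQuot.liftAlgHom_mkAlgHom_apply, Lem311.ev_E]
    rfl
  · intro r
    rw [QH.gX, RingQuot.liftAlgHom_mkAlgHom_apply, Lem311.ev_X]
  · intro r
    rw [QH.gP, RingQuot.liftAlgHom_mkAlgHom_apply, Lem311.ev_P]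
  · intro a
    obtain ⟨y, rfl⟩ := RingQuot.mkAlgHom_surjective F _ a
    rw [RingQuot.liftAlgHom_mkAlgHom_apply]
    rw [Submodule.mem_span_singleton]
    suffices h : ((Lem311.ev F ℓ n (κ j)) y (((1:F), (0:F)))).2 = 0 by
      refine ⟨((Lem311.ev F ℓ n (κ j)) y ((1:F), (0:F))).1, ?_⟩
      rw [Prod.ext_iff]
      constructor <;> simp [h]
    induction y using FreeAlgebra.induction with
    | grade0 r =>
        simp [Algebra.algebraMap_eq_smul_one]
    | grade1 q =>
        rw [show (Lem311.ev F ℓ n (κ j)) (FreeAlgebra.ι F q) = Lem311.g0 F ℓ n (κ j) q from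
          FreeAlgebra.lift_ι_apply _ _]
        cases q with
        | e i =>
            simp only [Lem311.g0]
            split_ifs <;> simp
        | x r =>
            show ((Lem311.g0 F ℓ n (κ j)) (QGen.x r) ((1:F), (0:F))).2 = 0
            simp [Lem311.g0, XactM]
        | p r => simp [Lem311.g0]
    | mul a b ha hb =>
        rw [map_mul, Module.End.mul_apply]
        have hp : (Lem311.ev F ℓ n (κ j)) b ((1:F), (0:F)) =
            ((Lem311.ev F ℓ n (κ j)) b ((1:F), (0:F))).1 • (((1:F), (0:F)) : F × F) := by
          rw [Prod.ext_iff]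
          constructor <;> simp [hb]
        rw [hp, map_smul]
        simp [ha]
    | add a b ha hb =>
        rw [map_add, LinearMap.add_apply]
        simp [ha, hb]
  · rintro ⟨W, hWinv, hcompl⟩
    have hT : ∀ w ∈ W, (XactM F ℓ (⟨1, by omega⟩ : Fin n)) w ∈ W := by
      intro w hw
      have h := hWinv (QH.gX F ℓ n l κ ⟨1, by omega⟩) w hw
      rwa [QH.gX, RingQuot.liftAlgHom_mkAlgHom_apply, Lem311.ev_X] at h
    by_cases hall : ∀ w ∈ W, (w : F × F).2 = 0
    · have htop : Submodule.span F {((1:F), (0:F))} ⊔ W = ⊤ := hcompl.sup_eq_top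
      have hmem : ((0:F), (1:F)) ∈ (⊤ : Submodule F (F × F)) := trivial
      rw [← htop] at hmem
      obtain ⟨u', hu', w', hw', huw⟩ := Submodule.mem_sup.mp hmem
      obtain ⟨a, rfl⟩ := Submodule.mem_span_singleton.mp hu'
      have h2 := congrArg Prod.snd huw
      have h3 := hall w' hw'
      simp [h3] at h2
    · push_neg at hall
      obtain ⟨w, hw, hw2⟩ := hall
      have h1 : XactM F ℓ (⟨1, by omega⟩ : Fin n) w ∈ W := hT w hw
      have hXw : XactM F ℓ (⟨1, by omega⟩ : Fin n) w = ((w.2 : F), (0:F)) := by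
        rw [Lem311.XactM_eq, show coeffM F ℓ ((⟨1, by omega⟩ : Fin n).val + 1) = 1 from
          Lem311.coeff_two F hℓ]
        simp [Lem311.L]
      have h2 : (((w.2 : F), (0:F)) : F × F) ∈ Submodule.span F {((1:F), (0:F))} :=
        Submodule.mem_span_singleton.mpr ⟨w.2, by simp⟩
      have h3 := Submodule.disjoint_def.mp hcompl.disjoint _ h2 (hXw ▸ h1)
      exact hw2 (by simpa using congrArg Prod.fst h3)
end
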